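/- The Choi map Λ: M_3(ℂ) → M_3(ℂ) defined by Λ((a_{ij})) = (1/2)·[[a_{11}+a_{22}, −a_{12}, −a_{13}], [−a_{21}, a_{22}+a_{33}, −a_{23}], [−a_{31}, −a_{32}, a_{33}+a_{11}]] is a positive map: if A ∈ M_3(ℂ) is positive semidefinite, then Λ(A) is positive semidefinite. -/

import Mathlib

/-!
Write `A = Bᴴ B = ∑ₖ v̄ₖ vₖᵀ` with `vₖ` the rows of `B`; as `Λ` is additive it suffices to treat
`A = v̄ vᵀ`. Then `2 Λ(A) = diag(d) - A` with `dᵢ = 2|vᵢ|² + |vᵢ₊₁|²` (indices mod 3), whose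
quadratic form at `x` is `∑ dᵢ |xᵢ|² - |v ⬝ x|²`. Since `|v ⬝ x| ≤ ∑ |vᵢ| |xᵢ|`, everything
reduces to Choi's real inequality `(∑ aᵢ xᵢ)² ≤ ∑ (2aᵢ² + aᵢ₊₁²) xᵢ²`. Choi's form is not a sum
of squares; the inequality follows from the weighted Cauchy–Schwarz inequality once
`∑ aᵢ² / (2aᵢ² + aᵢ₊₁²) ≤ 1`, which is AM–GM after clearing denominators.
-/

open scoped ComplexOrder

noncomputable section

/-- The (normalized) Choi map `Λ : M_3(ℂ) → M_3(ℂ)` of Eq. (7). -/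
def choiMap (A : Matrix (Fin 3) (Fin 3) ℂ) : Matrix (Fin 3) (Fin 3) ℂ :=
  (2 : ℂ)⁻¹ • !![A 0 0 + A 1 1, -A 0 1, -A 0 2;
                 -A 1 0, A 1 1 + A 2 2, -A 1 2;
                 -A 2 0, -A 2 1, A 2 2 + A 0 0]

open Matrix Finset

lemma cyclic_div_two_mul_add_le_one {p q r : ℝ} (hp : 0 < p) (hq : 0 < q) (hr : 0 < r) :
    p / (2 * p + q) + q / (2 * q + r) + r / (2 * r + p) ≤ 1 := by
  -- the cleared inequality is `p²r + q²p + r²q ≥ 3pqr`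
  rw [div_add_div _ _ (by positivity) (by positivity),
    div_add_div _ _ (by positivity) (by positivity), div_le_one (by positivity)]
  nlinarith [mul_nonneg hp.le (sq_nonneg (q - r)), mul_nonneg hq.le (sq_nonneg (r - p)),
    mul_nonneg hr.le (sq_nonneg (p - q)), mul_pos (mul_pos hp hq) hr]

lemma sq_sum_mul_le_sum_mul_sq {ι : Type*} (s : Finset ι) {a d : ι → ℝ} (x : ι → ℝ)
    (hd : ∀ i ∈ s, 0 < d i) (had : ∑ i ∈ s, a i ^ 2 / d i ≤ 1) :
    (∑ i ∈ s, a i * x i) ^ 2 ≤ ∑ i ∈ s, d i * x i ^ 2 :=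
  calc (∑ i ∈ s, a i * x i) ^ 2 ≤ (∑ i ∈ s, a i ^ 2 / d i) * ∑ i ∈ s, d i * x i ^ 2 :=
        sum_sq_le_sum_mul_sum_of_sq_le_mul s
          (fun i hi => div_nonneg (sq_nonneg _) (hd i hi).le)
          (fun i hi => mul_nonneg (hd i hi).le (sq_nonneg _))
          (fun i hi => le_of_eq (by field_simp [(hd i hi).ne']))
    _ ≤ ∑ i ∈ s, d i * x i ^ 2 :=
        mul_le_of_le_one_left (sum_nonneg fun i hi => mul_nonneg (hd i hi).le (sq_nonneg _)) had

theorem choi_inequality (a x : Fin 3 → ℝ) :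
    (∑ i, a i * x i) ^ 2 ≤ ∑ i, (2 * a i ^ 2 + a (i + 1) ^ 2) * x i ^ 2 := by
  by_cases ha : ∀ i, a i ≠ 0
  · have hsq (i : Fin 3) : 0 < a i ^ 2 := by have := ha i; positivity
    refine sq_sum_mul_le_sum_mul_sq _ x (fun i _ => by linarith [hsq i, hsq (i + 1)]) ?_
    simpa [Fin.sum_univ_three] using cyclic_div_two_mul_add_le_one (hsq 0) (hsq 1) (hsq 2)
  · obtain ⟨i, hi⟩ := not_forall_not.mp ha
    fin_cases i <;> simp_all [Fin.sum_univ_three] <;>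
      nlinarith [sq_nonneg (a 1 * x 1 - a 2 * x 2), sq_nonneg (a 2 * x 2 - a 0 * x 0),
        sq_nonneg (a 0 * x 0 - a 1 * x 1)]

lemma posSemidef_diagonal_sub_vecMulVec_star_self {𝕜 n : Type*} [RCLike 𝕜] [Fintype n]
    [DecidableEq n] (v : n → 𝕜) (d : n → ℝ)
    (h : ∀ x : n → 𝕜, ‖v ⬝ᵥ x‖ ^ 2 ≤ ∑ i, d i * ‖x i‖ ^ 2) :
    (diagonal (fun i => (d i : 𝕜)) - vecMulVec (star v) v).PosSemidef := by
  refine .of_dotProduct_mulVec_nonneg ?_ fun x => ?_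
  · exact (isHermitian_diagonal_of_self_adjoint _ (by ext i; simp)).sub
      (posSemidef_vecMulVec_star_self v).isHermitian
  · have hdiag : star x ⬝ᵥ (diagonal (fun i => (d i : 𝕜)) *ᵥ x)
        = ((∑ i, d i * ‖x i‖ ^ 2 : ℝ) : 𝕜) := by
      simp only [dotProduct, mulVec_diagonal, Pi.star_apply, RCLike.star_def]
      push_cast
      refine Finset.sum_congr rfl fun i _ => ?_
      rw [← RCLike.conj_mul]; ring
    have hrank : star x ⬝ᵥ (vecMulVec (star v) v *ᵥ x) = ((‖v ⬝ᵥ x‖ ^ 2 : ℝ) : 𝕜) := by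
      rw [vecMulVec_mulVec, op_smul_eq_smul, dotProduct_smul, star_dotProduct_star,
        dotProduct_comm, smul_eq_mul, mul_comm, RCLike.star_def, RCLike.conj_mul]
      push_cast; rfl
    have hform : star x ⬝ᵥ ((diagonal (fun i => (d i : 𝕜)) - vecMulVec (star v) v) *ᵥ x)
        = ((∑ i, d i * ‖x i‖ ^ 2 - ‖v ⬝ᵥ x‖ ^ 2 : ℝ) : 𝕜) := by
      rw [sub_mulVec, dotProduct_sub, hdiag, hrank, RCLike.ofReal_sub]
    rw [hform, RCLike.ofReal_nonneg, sub_nonneg]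
    exact h x

lemma choiMap_eq_smul_diagonal_sub (A : Matrix (Fin 3) (Fin 3) ℂ) :
    choiMap A = (2 : ℂ)⁻¹ • (diagonal (fun i => 2 * A i i + A (i + 1) (i + 1)) - A) := by
  ext i j
  fin_cases i <;> fin_cases j <;> simp [choiMap] <;> ring

lemma choiMap_add (A B : Matrix (Fin 3) (Fin 3) ℂ) :
    choiMap (A + B) = choiMap A + choiMap B := by
  ext i j
  fin_cases i <;> fin_cases j <;> simp [choiMap] <;> ring

lemma conjTranspose_mul_self_eq_sum_vecMulVec {m n R : Type*} [Fintype m] [CommSemiring R]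
    [StarRing R] (B : Matrix m n R) :
    Bᴴ * B = ∑ k, vecMulVec (star (B k)) (B k) := by
  ext i j
  simp [mul_apply, vecMulVec_apply, Matrix.sum_apply]

lemma choiMap_sum {ι : Type*} (s : Finset ι) (A : ι → Matrix (Fin 3) (Fin 3) ℂ) :
    choiMap (∑ k ∈ s, A k) = ∑ k ∈ s, choiMap (A k) :=
  map_sum (AddMonoidHom.mk' choiMap choiMap_add) A s

lemma posSemidef_choiMap_vecMulVec_star_self (v : Fin 3 → ℂ) :
    (choiMap (vecMulVec (star v) v)).PosSemidef := by
  have hdiag : (fun i => 2 * vecMulVec (star v) v i i + vecMulVec (star v) v (i + 1) (i + 1))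
      = fun i => ((2 * ‖v i‖ ^ 2 + ‖v (i + 1)‖ ^ 2 : ℝ) : ℂ) := by
    ext i
    simp [vecMulVec_apply, Complex.conj_mul']
  rw [choiMap_eq_smul_diagonal_sub, hdiag]
  refine (posSemidef_diagonal_sub_vecMulVec_star_self v _ fun x => ?_).smul
    (inv_nonneg.2 zero_le_two)
  calc ‖v ⬝ᵥ x‖ ^ 2 ≤ (∑ i, ‖v i‖ * ‖x i‖) ^ 2 := by
        gcongr
        exact (norm_sum_le _ _).trans_eq (by simp_rw [norm_mul])
    _ ≤ _ := choi_inequality _ _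

/-- the Choi map is a positive map: it sends positive semidefinite matrices to
positive semidefinite matrices. -/
theorem stmt9 (A : Matrix (Fin 3) (Fin 3) ℂ) (hA : A.PosSemidef) : (choiMap A).PosSemidef := by
  obtain ⟨B, rfl⟩ : ∃ B : Matrix (Fin 3) (Fin 3) ℂ, A = star B * B := by
    open scoped MatrixOrder in exact CStarAlgebra.nonneg_iff_eq_star_mul_self.mp hA.nonneg
  rw [star_eq_conjTranspose, conjTranspose_mul_self_eq_sum_vecMulVec, choiMap_sum]
  exact posSemidef_sum _ fun k _ => posSemidef_choiMap_vecMulVec_star_self (B k)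

end
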